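/- Let w = w_1 ⋯ w_ℓ ∈ S = K ≀_Γ Sym(Γ) be a disjoint wreath cycle decomposition. Then there exists an element a in the base group K^Γ × {1} such that w^a = w_1^a ⋯ w_ℓ^a and each w_i^a is a sparse wreath cycle, i.e., a wreath cycle whose base component is trivial in all but at most one point of Γ. -/

import Mathlib

/-!
For a wreath cycle `z = (f, h)` and a point `x` of its territory, the territory is the `h`-orbit
of `x`; put `a(hⁿ x) = (f(x) f(h x) ⋯ f(hⁿ⁻¹ x))⁻¹` on it, with `n` less than the orbit length, and `a = 1` elsewhere. Conjugating by
the base element `a` keeps the top and the territory and replaces the base entry at `γ` by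
`a(γ)⁻¹ f(γ) a(h γ)`, which telescopes to `1` everywhere except at `h⁻¹ x`. The conjugators of
pairwise disjoint wreath cycles have disjoint supports, so their pointwise product works for all
of them at once.
-/

set_option linter.unusedSectionVars false

/-- The wreath product `K ≀_Γ Sym(Γ)` (with right-action conventions from the paper):
multiplication `(f,h)(e,g) = (f · e^{h⁻¹}, hg)` where `[γ](f·e^{h⁻¹}) = [γ]f * [γ^h]e`. -/
structure Wr (K : Type*) (Γ : Type*) where
  base : Γ → K
  top : Equiv.Perm Γ

namespace Wr

variable {K Γ : Type*} [Group K]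

theorem ext' {w v : Wr K Γ} (h1 : w.base = v.base) (h2 : w.top = v.top) : w = v := by
  cases w; cases v; cases h1; cases h2; rfl

instance : Group (Wr K Γ) where
  mul w v := ⟨fun γ => w.base γ * v.base (w.top γ), w.top.trans v.top⟩
  one := ⟨fun _ => 1, 1⟩
  inv w := ⟨fun γ => (w.base (w.top⁻¹ γ))⁻¹, w.top⁻¹⟩
  mul_assoc a b c := ext' (funext fun γ => mul_assoc _ _ _) (Equiv.trans_assoc _ _ _)
  one_mul a := ext' (funext fun γ => one_mul _) (Equiv.refl_trans _)
  mul_one a := ext' (funext fun γ => mul_one _) (Equiv.trans_refl _)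
  inv_mul_cancel a := ext' (funext fun γ => inv_mul_cancel _) (Equiv.symm_trans_self _)

/-- The support of a permutation, as a set. -/
def psupp (h : Equiv.Perm Γ) : Set Γ := {γ | h γ ≠ γ}

/-- The territory of a wreath product element. -/
def terr (w : Wr K Γ) : Set Γ := psupp w.top ∪ {γ | w.base γ ≠ 1}

/-- Wreath cycles: either trivial top and a singleton territory, or the top is a
single nontrivial cycle and the territory equals its support. -/
def IsWreathCycle (w : Wr K Γ) : Prop :=
  (w.top = 1 ∧ ∃ γ₀, terr w = {γ₀}) ∨ (w.top.IsCycle ∧ terr w = psupp w.top)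

/-- The yade of `w` at `γ`: the ordered product `∏_{i=0}^{|h|-1} [γ^{h^i}]f`. -/
noncomputable def yade (w : Wr K Γ) (γ : Γ) : K :=
  ((List.range (orderOf w.top)).map fun i => w.base ((w.top ^ i) γ)).prod

end Wr

open Wr

section OrbitProduct

variable {α K : Type*} [Group K] (σ : Equiv.Perm α) (f : α → K) (x : α)

noncomputable def orbitProd (n : ℕ) : K :=
  ((List.range n).map fun j => f ((σ ^ j) x)).prod

theorem orbitProd_succ (n : ℕ) :
    orbitProd σ f x (n + 1) = orbitProd σ f x n * f ((σ ^ n) x) := by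
  simp [orbitProd, List.range_succ]

noncomputable def straighten (y : α) : K :=
  open Classical in
  if hy : ∃ n : ℕ, (σ ^ n) x = y then (orbitProd σ f x (Nat.find hy))⁻¹ else 1

variable {σ f x}

theorem straighten_of_not_exists_pow_apply_eq {y : α} (hy : ¬∃ n : ℕ, (σ ^ n) x = y) :
    straighten σ f x y = 1 :=
  dif_neg hy

theorem straighten_apply {y : α} (hy : ∃ n : ℕ, (σ ^ n) x = y) (hne : σ y ≠ x) :
    straighten σ f x (σ y) = (f y)⁻¹ * straighten σ f x y := by
  classical
  have pow_succ_apply (n : ℕ) : (σ ^ (n + 1)) x = σ ((σ ^ n) x) := by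
    rw [pow_succ', Equiv.Perm.mul_apply]
  have hσy : ∃ n : ℕ, (σ ^ n) x = σ y := ⟨Nat.find hy + 1, by rw [pow_succ_apply, Nat.find_spec hy]⟩
  have hindex : Nat.find hσy = Nat.find hy + 1 := by
    refine (Nat.find_eq_iff hσy).mpr ⟨by rw [pow_succ_apply, Nat.find_spec hy], ?_⟩
    rintro (_ | n) hn hn_eq
    · exact hne hn_eq.symm
    · rw [pow_succ_apply] at hn_eq
      exact Nat.find_min hy (by omega) (σ.injective hn_eq)
  unfold straighten
  rw [dif_pos hσy, dif_pos hy, hindex, orbitProd_succ, Nat.find_spec hy, mul_inv_rev]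

end OrbitProduct

theorem conj_list_prod {G : Type*} [Group G] (a : G) (l : List G) :
    a⁻¹ * l.prod * a = (l.map fun z => a⁻¹ * z * a).prod := by
  induction l with
  | nil => simp
  | cons z t ih => rw [List.prod_cons, List.map_cons, List.prod_cons, ← ih]; group

theorem prod_map_apply_eq_of_pairwise_disjoint {ι α M : Type*} [Monoid M] {l : List ι}
    {s : ι → Set α} {g : ι → α → M} (hg : ∀ j ∈ l, ∀ y ∉ s j, g j y = 1)
    (hl : l.Pairwise fun i j => Disjoint (s i) (s j)) {i : ι} (hi : i ∈ l) {y : α}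
    (hy : y ∈ s i) : (l.map fun j => g j y).prod = g i y := by
  induction l with
  | nil => cases hi
  | cons j t ih =>
    rw [List.pairwise_cons] at hl
    rw [List.map_cons, List.prod_cons]
    rcases List.mem_cons.mp hi with rfl | hit
    · rw [List.prod_eq_one, mul_one]
      simp only [List.mem_map]
      rintro _ ⟨k, hk, rfl⟩
      exact hg k (List.mem_cons_of_mem _ hk) y (Set.disjoint_left.mp (hl.1 k hk) hy)
    · rw [hg j List.mem_cons_self y (Set.disjoint_right.mp (hl.1 i hit) hy), one_mul]
      exact ih (fun k hk => hg k (List.mem_cons_of_mem _ hk)) hl.2 hit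

namespace Wr

variable {K Γ : Type*} [Group K]

@[simp] theorem mul_base (w v : Wr K Γ) (γ : Γ) : (w * v).base γ = w.base γ * v.base (w.top γ) :=
  rfl

@[simp] theorem mul_top (w v : Wr K Γ) : (w * v).top = w.top.trans v.top :=
  rfl

@[simp] theorem inv_base (w : Wr K Γ) (γ : Γ) : w⁻¹.base γ = (w.base (w.top⁻¹ γ))⁻¹ :=
  rfl

@[simp] theorem inv_top (w : Wr K Γ) : w⁻¹.top = w.top⁻¹ :=
  rfl

def IsSparse (w : Wr K Γ) : Prop :=
  ∃ γ₀ : Γ, ∀ γ : Γ, γ ≠ γ₀ → w.base γ = 1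

theorem notMem_terr_iff {w : Wr K Γ} {γ : Γ} : γ ∉ terr w ↔ w.top γ = γ ∧ w.base γ = 1 := by
  simp [terr, psupp]

section BaseConjugation

variable {a : Wr K Γ} (ha : a.top = 1) (z : Wr K Γ)
include ha

theorem conj_base (γ : Γ) :
    (a⁻¹ * z * a).base γ = (a.base γ)⁻¹ * z.base γ * a.base (z.top γ) := by
  simp [ha]

theorem conj_top : (a⁻¹ * z * a).top = z.top := by
  ext γ
  simp [ha]

theorem terr_conj : terr (a⁻¹ * z * a) = terr z := by
  ext γ
  rw [← not_iff_not, notMem_terr_iff, notMem_terr_iff, conj_top ha, conj_base ha]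
  refine and_congr_right fun hγ => ?_
  rw [hγ, mul_assoc, inv_mul_eq_one, eq_comm, mul_eq_right]

theorem isWreathCycle_conj : IsWreathCycle (a⁻¹ * z * a) ↔ IsWreathCycle z := by
  rw [IsWreathCycle, IsWreathCycle, conj_top ha, terr_conj ha]

end BaseConjugation

namespace IsWreathCycle

variable [Finite Γ] {z : Wr K Γ}

theorem terr_nonempty (hz : IsWreathCycle z) : (terr z).Nonempty := by
  rcases hz with ⟨-, γ₀, hterr⟩ | ⟨⟨γ, hγ, -⟩, hterr⟩
  · exact ⟨γ₀, hterr ▸ rfl⟩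
  · exact ⟨γ, hterr ▸ hγ⟩

theorem mem_terr_iff (hz : IsWreathCycle z) {x y : Γ} (hx : x ∈ terr z) :
    y ∈ terr z ↔ ∃ n : ℕ, (z.top ^ n) x = y := by
  rcases hz with ⟨htop, γ₀, hterr⟩ | ⟨hcycle, hterr⟩
  · rw [hterr] at hx ⊢
    simp [htop, Set.mem_singleton_iff.mp hx, eq_comm]
  · rw [hterr] at hx ⊢
    refine ⟨hcycle.exists_pow_eq hx, ?_⟩
    rintro ⟨n, rfl⟩
    exact (Equiv.Perm.apply_pow_apply_eq_iff _ n).not.mpr hx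

theorem straighten_eq_one (hz : IsWreathCycle z) {x γ : Γ} (hx : x ∈ terr z)
    (hγ : γ ∉ terr z) : straighten z.top z.base x γ = 1 :=
  straighten_of_not_exists_pow_apply_eq ((hz.mem_terr_iff hx).not.mp hγ)

/-- The only possibly nontrivial base entry left is at `z.top⁻¹ x`, where the orbit closes up. -/
theorem isSparse_conj (hz : IsWreathCycle z) {x : Γ} (hx : x ∈ terr z) {a : Wr K Γ}
    (ha : a.top = 1) (haz : Set.EqOn a.base (straighten z.top z.base x) (terr z)) :
    IsSparse (a⁻¹ * z * a) := by
  refine ⟨z.top⁻¹ x, fun γ hγx => ?_⟩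
  rw [Ne, Equiv.Perm.eq_inv_iff_eq] at hγx
  rw [conj_base ha]
  by_cases hγ : γ ∈ terr z
  · obtain ⟨n, rfl⟩ := (hz.mem_terr_iff hx).mp hγ
    have hσγ : z.top ((z.top ^ n) x) ∈ terr z :=
      (hz.mem_terr_iff hx).mpr ⟨n + 1, by rw [pow_succ', Equiv.Perm.mul_apply]⟩
    rw [haz hγ, haz hσγ, straighten_apply ⟨n, rfl⟩ hγx]
    group
  · obtain ⟨hfix, hbase⟩ := notMem_terr_iff.mp hγ
    rw [hfix, hbase, mul_one, inv_mul_cancel]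

end IsWreathCycle

noncomputable def sparsifier (z : Wr K Γ) : Γ → K :=
  open Classical in
  if h : (terr z).Nonempty then straighten z.top z.base h.some else 1

theorem IsWreathCycle.sparsifier_eq_one [Finite Γ] {z : Wr K Γ} (hz : IsWreathCycle z) {γ : Γ}
    (hγ : γ ∉ terr z) : sparsifier z γ = 1 := by
  rw [sparsifier, dif_pos hz.terr_nonempty]
  exact hz.straighten_eq_one hz.terr_nonempty.some_mem hγ

theorem IsWreathCycle.isSparse_conj_of_eqOn_sparsifier [Finite Γ] {z : Wr K Γ}
    (hz : IsWreathCycle z) {a : Wr K Γ} (ha : a.top = 1)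
    (haz : Set.EqOn a.base (sparsifier z) (terr z)) : IsSparse (a⁻¹ * z * a) := by
  refine hz.isSparse_conj hz.terr_nonempty.some_mem ha fun γ hγ => ?_
  rw [haz hγ, sparsifier, dif_pos hz.terr_nonempty]

end Wr

/-- every disjoint wreath cycle decomposition can be conjugated by an
element of the base group into a sparse wreath cycle decomposition. -/
theorem exists_sparse_decomposition {K Γ : Type*} [Group K] [Fintype Γ]
    (l : List (Wr K Γ))
    (hc : ∀ z ∈ l, IsWreathCycle z)
    (hd : l.Pairwise fun z v => Disjoint (terr z) (terr v)) :
    ∃ a : Wr K Γ, a.top = 1 ∧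
      a⁻¹ * l.prod * a = (l.map fun z => a⁻¹ * z * a).prod ∧
      ∀ z ∈ l, IsWreathCycle (a⁻¹ * z * a) ∧
        ∃ γ₀ : Γ, ∀ γ : Γ, γ ≠ γ₀ → (a⁻¹ * z * a).base γ = 1 := by
  let a : Wr K Γ := ⟨fun γ => (l.map fun v => sparsifier v γ).prod, 1⟩
  refine ⟨a, rfl, conj_list_prod a l, fun z hz => ⟨(isWreathCycle_conj rfl z).mpr (hc z hz), ?_⟩⟩
  refine (hc z hz).isSparse_conj_of_eqOn_sparsifier rfl fun γ hγ => ?_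
  exact prod_map_apply_eq_of_pairwise_disjoint
    (fun v hv δ hδ => (hc v hv).sparsifier_eq_one hδ) hd hz hγ
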